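/- For every pair of nonnegative integers ν and every A ≥ 0 there is a constant C = C(ν, A) > 0 such that for all real T ≥ 2 and 1 ≤ M ≤ T and all t ∈ ℝ, the ν-th derivative of the restriction of h_{T,M} to ℝ satisfies |h_{T,M}^{(ν)}(t)| ≤ C · M^{−ν} · ((1 + |t−T|/M)^{−A} + (1 + |t+T|/M)^{−A}). -/

import Mathlib

/-!
The restriction of `h_{T,M}` to `ℝ` extends to an entire function, so Cauchy's estimate on the
circle of radius `M` about `t` bounds `h^{(ν)}(t)` by `ν! M^{-ν}` times the maximum of `h` on
that circle. On the strip `|Im z| ≤ M` the factor `exp(-((z ∓ T)/M)²)` is at most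
`e · exp(-u²)` with `u = (Re z ∓ T)/M`, the polynomial prefactor is at most `4(1 + u²)` because
`M ≤ T`, and `(1 + u²) exp(-u²)` decays faster than any power of `1 + |u|`. Moving the centre by
at most `M` changes `1 + |u|` by at most a factor `2`.
-/

/-- The test function `h_{T,M}(z) = ((z² + 1/4)/(T² + 1/4)) ·
(exp(−((z−T)/M)²) + exp(−((z+T)/M)²))`. -/
noncomputable def hTM (T M : ℝ) (z : ℂ) : ℂ :=
  ((z ^ 2 + 1 / 4) / ((T : ℂ) ^ 2 + 1 / 4)) *
    (Complex.exp (-(((z - (T : ℂ)) / (M : ℂ)) ^ 2)) +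
     Complex.exp (-(((z + (T : ℂ)) / (M : ℂ)) ^ 2)))

open Complex Metric

lemma iteratedDeriv_comp_ofReal {f : ℂ → ℂ} (hf : Differentiable ℂ f) (n : ℕ) :
    iteratedDeriv n (fun s : ℝ => f s) = fun t : ℝ => iteratedDeriv n f t := by
  induction n with
  | zero => simp
  | succ n ih =>
    ext t
    rw [iteratedDeriv_succ, iteratedDeriv_succ, ih]
    exact ((hf.contDiff.differentiable_iteratedDeriv n (WithTop.coe_lt_top _)) t).hasDerivAt
      |>.comp_ofReal.deriv

lemma Complex.norm_exp_neg_sq (w : ℂ) : ‖exp (-w ^ 2)‖ = Real.exp (w.im ^ 2 - w.re ^ 2) := by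
  rw [norm_exp, neg_re, sq, mul_re]
  ring_nf

lemma one_add_sq_mul_exp_neg_sq_le {A : ℝ} (hA : 0 ≤ A) (u : ℝ) :
    (1 + u ^ 2) * Real.exp (-u ^ 2) ≤ 2 * Real.exp (A ^ 2 / 2) * (1 + |u|) ^ (-A) := by
  have hpos : (0 : ℝ) < 1 + |u| := by positivity
  rw [Real.rpow_neg hpos.le, ← div_eq_mul_inv, le_div_iff₀ (by positivity)]
  have hpoly : 1 + u ^ 2 ≤ 2 * Real.exp (u ^ 2 / 2) := by
    nlinarith [Real.add_one_le_exp (u ^ 2 / 2)]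
  -- `A |u| ≤ u²/2 + A²/2` (AM-GM) turns the power into a Gaussian factor
  have hpow : (1 + |u|) ^ A ≤ Real.exp (u ^ 2 / 2 + A ^ 2 / 2) :=
    calc (1 + |u|) ^ A ≤ Real.exp |u| ^ A := by
          gcongr; linarith [Real.add_one_le_exp |u|]
      _ = Real.exp (A * |u|) := by rw [← Real.exp_mul, mul_comm]
      _ ≤ Real.exp (u ^ 2 / 2 + A ^ 2 / 2) := by
          gcongr; nlinarith [sq_nonneg (|u| - A), sq_abs u]
  calc (1 + u ^ 2) * Real.exp (-u ^ 2) * (1 + |u|) ^ A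
      ≤ 2 * Real.exp (u ^ 2 / 2) * Real.exp (-u ^ 2) * Real.exp (u ^ 2 / 2 + A ^ 2 / 2) := by
        gcongr
    _ = 2 * Real.exp (A ^ 2 / 2) := by
        rw [mul_assoc, mul_assoc, ← Real.exp_add, ← Real.exp_add]; ring_nf

lemma one_add_abs_div_rpow_neg_le {A M a b : ℝ} (hA : 0 ≤ A) (hM : 0 < M)
    (hab : |a - b| ≤ M) :
    (1 + |a| / M) ^ (-A) ≤ 2 ^ A * (1 + |b| / M) ^ (-A) := by
  have hb : |b| / M ≤ |a| / M + 1 := by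
    rw [div_add_one hM.ne', div_le_div_iff_of_pos_right hM]
    linarith [abs_sub_abs_le_abs_sub b a, abs_sub_comm a b]
  have ha : 0 ≤ |a| / M := by positivity
  calc (1 + |a| / M) ^ (-A) ≤ ((1 + |b| / M) / 2) ^ (-A) :=
        Real.rpow_le_rpow_of_nonpos (by positivity) (by linarith) (by linarith)
    _ = 2 ^ A * (1 + |b| / M) ^ (-A) := by
        rw [Real.div_rpow (by positivity) zero_le_two, Real.rpow_neg zero_le_two, div_inv_eq_mul,
          mul_comm]

section Strip

variable {T M c : ℝ} {z : ℂ}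

lemma norm_exp_neg_sq_sub_div_le (hM : 0 < M) (hz : |z.im| ≤ M) :
    ‖exp (-((z - c) / M) ^ 2)‖ ≤ Real.exp 1 * Real.exp (-((z.re - c) / M) ^ 2) := by
  have him : (z.im / M) ^ 2 ≤ 1 := by
    rw [div_pow, div_le_one (by positivity)]
    exact sq_le_sq' (neg_le_of_abs_le hz) (le_of_abs_le hz)
  rw [norm_exp_neg_sq, ← Real.exp_add, div_ofReal_re, div_ofReal_im]
  simp only [sub_re, sub_im, ofReal_re, ofReal_im, sub_zero]
  gcongr
  linarith

lemma norm_div_sq_add_quarter_le (hM : 0 < M) (hMT : M ≤ T) (hc : c ^ 2 ≤ T ^ 2)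
    (hz : |z.im| ≤ M) :
    ‖(z ^ 2 + 1 / 4) / ((T : ℂ) ^ 2 + 1 / 4)‖ ≤ 4 * (1 + ((z.re - c) / M) ^ 2) := by
  set u := (z.re - c) / M
  have hre : z.re = u * M + c := by linarith [div_mul_cancel₀ (z.re - c) hM.ne']
  have him : z.im ^ 2 ≤ M ^ 2 := sq_le_sq' (neg_le_of_abs_le hz) (le_of_abs_le hz)
  have hnum : ‖z ^ 2 + 1 / 4‖ ≤ z.re ^ 2 + z.im ^ 2 + 1 / 4 := by
    calc ‖z ^ 2 + 1 / 4‖ ≤ ‖z ^ 2‖ + ‖(1 / 4 : ℂ)‖ := norm_add_le _ _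
      _ = z.re ^ 2 + z.im ^ 2 + 1 / 4 := by
          rw [norm_pow, Complex.sq_norm, normSq_apply]; norm_num; ring
  have hden : ‖(T : ℂ) ^ 2 + 1 / 4‖ = T ^ 2 + 1 / 4 := by
    rw [show (T : ℂ) ^ 2 + 1 / 4 = ((T ^ 2 + 1 / 4 : ℝ) : ℂ) by push_cast; ring, norm_real,
      Real.norm_of_nonneg (by positivity)]
  rw [norm_div, hden, div_le_iff₀ (by positivity)]
  rw [hre] at hnum
  have hMT2 : M ^ 2 ≤ T ^ 2 := by nlinarith
  nlinarith [sq_nonneg (u * M - c), mul_le_mul_of_nonneg_left hMT2 (sq_nonneg u)]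

lemma norm_div_sq_add_quarter_mul_exp_le {A : ℝ} (hA : 0 ≤ A) (hM : 0 < M) (hMT : M ≤ T)
    (hc : c ^ 2 ≤ T ^ 2) (hz : |z.im| ≤ M) :
    ‖(z ^ 2 + 1 / 4) / ((T : ℂ) ^ 2 + 1 / 4)‖ * ‖exp (-((z - c) / M) ^ 2)‖ ≤
      8 * Real.exp (1 + A ^ 2 / 2) * (1 + |z.re - c| / M) ^ (-A) := by
  set u := (z.re - c) / M
  have hu : |u| = |z.re - c| / M := by rw [abs_div, abs_of_pos hM]
  calc ‖(z ^ 2 + 1 / 4) / ((T : ℂ) ^ 2 + 1 / 4)‖ * ‖exp (-((z - c) / M) ^ 2)‖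
      ≤ 4 * (1 + u ^ 2) * (Real.exp 1 * Real.exp (-u ^ 2)) :=
        mul_le_mul (norm_div_sq_add_quarter_le hM hMT hc hz) (norm_exp_neg_sq_sub_div_le hM hz)
          (norm_nonneg _) (by positivity)
    _ = 4 * Real.exp 1 * ((1 + u ^ 2) * Real.exp (-u ^ 2)) := by ring
    _ ≤ 4 * Real.exp 1 * (2 * Real.exp (A ^ 2 / 2) * (1 + |u|) ^ (-A)) :=
        mul_le_mul_of_nonneg_left (one_add_sq_mul_exp_neg_sq_le hA u) (by positivity)
    _ = 8 * Real.exp (1 + A ^ 2 / 2) * (1 + |z.re - c| / M) ^ (-A) := by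
        rw [hu, Real.exp_add]; ring

lemma norm_hTM_le {A : ℝ} (hA : 0 ≤ A) (hM : 0 < M) (hMT : M ≤ T) (hz : |z.im| ≤ M) :
    ‖hTM T M z‖ ≤ 8 * Real.exp (1 + A ^ 2 / 2) *
      ((1 + |z.re - T| / M) ^ (-A) + (1 + |z.re + T| / M) ^ (-A)) := by
  have hplus : z + T = z - ((-T : ℝ) : ℂ) := by push_cast; ring
  have hminus := norm_div_sq_add_quarter_mul_exp_le (c := T) hA hM hMT le_rfl hz
  have hplus' := norm_div_sq_add_quarter_mul_exp_le (c := -T) hA hM hMT (by rw [neg_sq]) hz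
  rw [sub_neg_eq_add, ← hplus] at hplus'
  rw [hTM, norm_mul, mul_add]
  refine (mul_le_mul_of_nonneg_left (norm_add_le _ _) (norm_nonneg _)).trans ?_
  rw [mul_add]
  exact add_le_add hminus hplus'

lemma norm_hTM_le_of_mem_sphere {A t : ℝ} (hA : 0 ≤ A) (hM : 0 < M) (hMT : M ≤ T)
    (hz : z ∈ sphere (t : ℂ) M) :
    ‖hTM T M z‖ ≤ 2 ^ A * (8 * Real.exp (1 + A ^ 2 / 2)) *
      ((1 + |t - T| / M) ^ (-A) + (1 + |t + T| / M) ^ (-A)) := by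
  have hdist : ‖z - t‖ = M := mem_sphere_iff_norm.mp hz
  have him : |z.im| ≤ M := by simpa using (abs_im_le_norm (z - t)).trans hdist.le
  have hre : |z.re - t| ≤ M := by simpa using (abs_re_le_norm (z - t)).trans hdist.le
  have hshift (c : ℝ) : (1 + |z.re + c| / M) ^ (-A) ≤ 2 ^ A * (1 + |t + c| / M) ^ (-A) :=
    one_add_abs_div_rpow_neg_le hA hM (by rwa [add_sub_add_right_eq_sub])
  calc ‖hTM T M z‖
      ≤ 8 * Real.exp (1 + A ^ 2 / 2) *
          ((1 + |z.re - T| / M) ^ (-A) + (1 + |z.re + T| / M) ^ (-A)) :=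
        norm_hTM_le hA hM hMT him
    _ ≤ 8 * Real.exp (1 + A ^ 2 / 2) *
          (2 ^ A * (1 + |t - T| / M) ^ (-A) + 2 ^ A * (1 + |t + T| / M) ^ (-A)) := by
        simp only [sub_eq_add_neg]
        gcongr <;> apply hshift
    _ = _ := by ring

end Strip

lemma differentiable_hTM (T M : ℝ) : Differentiable ℂ (hTM T M) := by
  unfold hTM; fun_prop

/-- For every `ν ∈ ℕ` and `A ≥ 0` there is `C = C(ν, A) > 0` such that for all
`T ≥ 2`, `1 ≤ M ≤ T`, and `t ∈ ℝ`, the ν-th derivative of the restriction of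
`h_{T,M}` to ℝ satisfies
`|h_{T,M}^{(ν)}(t)| ≤ C · M^{−ν} · ((1 + |t−T|/M)^{−A} + (1 + |t+T|/M)^{−A})`. -/
theorem stmt_2 :
    ∀ (ν : ℕ) (A : ℝ), 0 ≤ A → ∃ C : ℝ, 0 < C ∧
      ∀ T M t : ℝ, 2 ≤ T → 1 ≤ M → M ≤ T →
        ‖iteratedDeriv ν (fun s : ℝ => hTM T M (s : ℂ)) t‖ ≤
          C * M ^ (-(ν : ℝ)) *
            ((1 + |t - T| / M) ^ (-A) + (1 + |t + T| / M) ^ (-A)) := by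
  intro ν A hA
  refine ⟨ν.factorial * (2 ^ A * (8 * Real.exp (1 + A ^ 2 / 2))), by positivity,
    fun T M t _ hM hMT => ?_⟩
  have hM0 : 0 < M := by linarith
  rw [iteratedDeriv_comp_ofReal (differentiable_hTM T M)]
  calc _ ≤ ν.factorial * (2 ^ A * (8 * Real.exp (1 + A ^ 2 / 2)) *
          ((1 + |t - T| / M) ^ (-A) + (1 + |t + T| / M) ^ (-A))) / M ^ ν :=
        norm_iteratedDeriv_le_of_forall_mem_sphere_norm_le ν hM0
          (differentiable_hTM T M).diffContOnCl fun _ hz => norm_hTM_le_of_mem_sphere hA hM0 hMT hz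
    _ = _ := by rw [Real.rpow_neg hM0.le, Real.rpow_natCast]; ring
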